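/- arXiv:2306.13184 — 2 statements merged into one kernel-verified Lean document; each statement's English description precedes it below -/
import Mathlib

section
/- Let W be independent of (X,Y). If a random variable U satisfies I(U;X) = ε and H(Y|U,X,W) = 0, then H(U) ≥ H(Y|X). -/
/-!
By independence, `H(X,Y) + H(W) = H(X,Y,W) ≤ H(X,Y,W,U)`, and `H(X,Y,W,U) = H(X,W,U)` since `Y`
is a function of `(X,W,U)`. Subadditivity and independence once more give
`H(X,W,U) ≤ H(X,W) + H(U) = H(X) + H(W) + H(U)`, so `H(X,Y) - H(X) ≤ H(U)`.
-/

/-- Shannon entropy (base 2) of a finitely supported distribution given as a function. -/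
noncomputable def ent {α : Type*} [Fintype α] (q : α → ℝ) : ℝ :=
  - ∑ a, q a * Real.logb 2 (q a)

open Real

section Entropy

variable {α β : Type*} [Fintype α] [Fintype β]

lemma ent_comp_equiv (e : β ≃ α) (q : α → ℝ) : ent (q ∘ e) = ent q :=
  congrArg Neg.neg (e.sum_comp fun a => q a * logb 2 (q a))

lemma sum_mul_comp_fst (f : α × β → ℝ) (h : α → ℝ) :
    ∑ z, f z * h z.1 = ∑ a, (∑ b, f (a, b)) * h a := by
  simp only [Fintype.sum_prod_type, Finset.sum_mul]

lemma sum_mul_comp_snd (f : α × β → ℝ) (h : β → ℝ) :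
    ∑ z, f z * h z.2 = ∑ b, (∑ a, f (a, b)) * h b := by
  rw [Fintype.sum_prod_type, Finset.sum_comm]
  simp only [Finset.sum_mul]

lemma mul_logb_mul {c x y : ℝ} (h : c ≠ 0 → x ≠ 0 ∧ y ≠ 0) :
    c * logb 2 (x * y) = c * logb 2 x + c * logb 2 y := by
  by_cases hc : c = 0
  · simp [hc]
  · obtain ⟨hx, hy⟩ := h hc
    rw [logb_mul hx hy, mul_add]

lemma mul_log_sub_mul_log_le {x y : ℝ} (hx : 0 ≤ x) (hy : 0 ≤ y) (hxy : 0 < x → 0 < y) :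
    x * log y - x * log x ≤ y - x := by
  rcases hx.eq_or_lt with rfl | hx
  · simpa using hy
  · have hy := hxy hx
    have h := log_le_sub_one_of_pos (div_pos hy hx)
    rw [log_div hy.ne' hx.ne'] at h
    have h' := mul_le_mul_of_nonneg_left h hx.le
    rwa [mul_sub, mul_sub, mul_one, mul_div_cancel₀ _ hx.ne'] at h'

/-- Gibbs' inequality. -/
lemma sum_mul_logb_le_sum_mul_logb (f g : α → ℝ) (hf : ∀ a, 0 ≤ f a) (hg : ∀ a, 0 ≤ g a)
    (hfg : ∀ a, 0 < f a → 0 < g a) (hsum : ∑ a, g a ≤ ∑ a, f a) :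
    ∑ a, f a * logb 2 (g a) ≤ ∑ a, f a * logb 2 (f a) := by
  simp only [logb, ← mul_div_assoc, ← Finset.sum_div]
  refine div_le_div_of_nonneg_right ?_ (log_nonneg one_le_two)
  have h := Finset.sum_le_sum fun a (_ : a ∈ Finset.univ) =>
    mul_log_sub_mul_log_le (hf a) (hg a) (hfg a)
  rw [Finset.sum_sub_distrib, Finset.sum_sub_distrib] at h
  linarith

lemma ent_prod_mul (qa : α → ℝ) (qb : β → ℝ) (ha : ∑ a, qa a = 1) (hb : ∑ b, qb b = 1) :
    ent (fun z : α × β => qa z.1 * qb z.2) = ent qa + ent qb := by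
  have hsplit : ∀ z : α × β, qa z.1 * qb z.2 * logb 2 (qa z.1 * qb z.2)
      = qa z.1 * qb z.2 * logb 2 (qa z.1) + qa z.1 * qb z.2 * logb 2 (qb z.2) :=
    fun z => mul_logb_mul mul_ne_zero_iff.mp
  have hfst := sum_mul_comp_fst (fun z : α × β => qa z.1 * qb z.2) fun a => logb 2 (qa a)
  have hsnd := sum_mul_comp_snd (fun z : α × β => qa z.1 * qb z.2) fun b => logb 2 (qb b)
  simp only [← Finset.mul_sum, ← Finset.sum_mul, ha, hb, mul_one, one_mul] at hfst hsnd
  simp only [ent, hsplit, Finset.sum_add_distrib, hfst, hsnd]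
  ring

lemma ent_fst_le (f : α × β → ℝ) (hf : ∀ z, 0 ≤ f z) :
    ent (fun a => ∑ b, f (a, b)) ≤ ent f := by
  have hle : ∀ z : α × β, f z ≤ ∑ b, f (z.1, b) := fun z =>
    Finset.single_le_sum (fun b _ => hf (z.1, b)) (Finset.mem_univ z.2)
  rw [ent, ent, neg_le_neg_iff, ← sum_mul_comp_fst f fun a => logb 2 (∑ b, f (a, b))]
  refine Finset.sum_le_sum fun z _ => ?_
  rcases (hf z).eq_or_lt with h | h
  · simp [← h]
  · exact mul_le_mul_of_nonneg_left (logb_le_logb_of_le one_lt_two h (hle z)) (hf z)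

lemma ent_le_ent_fst_add_ent_snd (f : α × β → ℝ) (hf : ∀ z, 0 ≤ f z) (hsum : ∑ z, f z = 1) :
    ent f ≤ ent (fun a => ∑ b, f (a, b)) + ent (fun b => ∑ a, f (a, b)) := by
  set qa : α → ℝ := fun a => ∑ b, f (a, b)
  set qb : β → ℝ := fun b => ∑ a, f (a, b)
  have hqa : ∀ z : α × β, f z ≤ qa z.1 := fun z =>
    Finset.single_le_sum (fun b _ => hf (z.1, b)) (Finset.mem_univ z.2)
  have hqb : ∀ z : α × β, f z ≤ qb z.2 := fun z =>
    Finset.single_le_sum (fun a _ => hf (a, z.2)) (Finset.mem_univ z.1)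
  have hsa : ∑ a, qa a = 1 := by rw [← hsum, Fintype.sum_prod_type]
  have hsb : ∑ b, qb b = 1 := by rw [← hsum, Fintype.sum_prod_type, Finset.sum_comm]
  have hprod : ∑ z : α × β, qa z.1 * qb z.2 = 1 := by
    simp only [Fintype.sum_prod_type, ← Finset.mul_sum, hsb, mul_one, hsa]
  have gibbs := sum_mul_logb_le_sum_mul_logb f (fun z => qa z.1 * qb z.2) hf
    (fun z => mul_nonneg ((hf z).trans (hqa z)) ((hf z).trans (hqb z)))
    (fun z h => mul_pos (h.trans_le (hqa z)) (h.trans_le (hqb z))) (by rw [hprod, hsum])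
  have hcross : ∑ z, f z * logb 2 (qa z.1 * qb z.2)
      = ∑ a, qa a * logb 2 (qa a) + ∑ b, qb b * logb 2 (qb b) := by
    rw [← sum_mul_comp_fst f fun a => logb 2 (qa a), ← sum_mul_comp_snd f fun b => logb 2 (qb b),
      ← Finset.sum_add_distrib]
    refine Finset.sum_congr rfl fun z _ => mul_logb_mul fun h => ?_
    have h := lt_of_le_of_ne (hf z) (Ne.symm h)
    exact ⟨(h.trans_le (hqa z)).ne', (h.trans_le (hqb z)).ne'⟩
  simp only [ent]
  linarith

end Entropy

section ProductMarginal

variable {α β γ : Type*} [Fintype α] [Fintype β] [Fintype γ]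

lemma ent_add_ent_le_of_marginal_eq_mul (f : (α × β) × γ → ℝ) (hf : ∀ z, 0 ≤ f z)
    (qa : α → ℝ) (qb : β → ℝ) (ha : ∑ a, qa a = 1) (hb : ∑ b, qb b = 1)
    (hmarg : ∀ a b, ∑ c, f ((a, b), c) = qa a * qb b) :
    ent qa + ent qb ≤ ent f := by
  rw [← ent_prod_mul qa qb ha hb]
  convert ent_fst_le f hf using 2
  ext ⟨a, b⟩
  exact (hmarg a b).symm

lemma ent_le_ent_add_ent_add_ent_of_marginal_eq_mul (f : α × β × γ → ℝ) (hf : ∀ z, 0 ≤ f z)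
    (qa : α → ℝ) (qb : β → ℝ) (qc : γ → ℝ) (ha : ∑ a, qa a = 1) (hb : ∑ b, qb b = 1)
    (hab : ∀ a b, ∑ c, f (a, b, c) = qa a * qb b) (hc : ∀ c, ∑ a, ∑ b, f (a, b, c) = qc c) :
    ent f ≤ ent qa + ent qb + ent qc := by
  let e := Equiv.prodAssoc α β γ
  have hsum : ∑ z, (f ∘ e) z = 1 := by
    simp only [Fintype.sum_prod_type, Function.comp_apply, e, Equiv.prodAssoc_apply, hab,
      ← Finset.mul_sum, hb, mul_one, ha]
  have h := ent_le_ent_fst_add_ent_snd (f ∘ e) (fun z => hf _) hsum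
  rw [ent_comp_equiv] at h
  rw [← ent_prod_mul qa qb ha hb]
  convert h using 3
  · funext ab
    exact (hab ab.1 ab.2).symm
  · funext c
    rw [← hc, Fintype.sum_prod_type]
    rfl

end ProductMarginal

theorem stmt3_general {X Y W U : Type*} [Fintype X] [Fintype Y] [Fintype W] [Fintype U]
    (p : X × Y × W × U → ℝ) (hpos : ∀ z, 0 ≤ p z) (hsum : ∑ z, p z = 1)
    (pX : X → ℝ) (hpX : ∀ x, pX x = ∑ y, ∑ w, ∑ u, p (x, y, w, u))
    (pW : W → ℝ) (hpW : ∀ w, pW w = ∑ x, ∑ y, ∑ u, p (x, y, w, u))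
    (pU : U → ℝ) (hpU : ∀ u, pU u = ∑ x, ∑ y, ∑ w, p (x, y, w, u))
    (pXY : X × Y → ℝ)
    (pXWU : X × W × U → ℝ) (hpXWU : ∀ x w u, pXWU (x, w, u) = ∑ y, p (x, y, w, u))
    -- W is independent of (X,Y)
    (hindep : ∀ x y w, (∑ u, p (x, y, w, u)) = pXY (x, y) * pW w)
    -- H(Y|U,X,W) = 0
    (hH : ent p - ent pXWU = 0) :
    -- H(U) ≥ H(Y|X)
    ent pU ≥ ent pXY - ent pX := by
  have sX : ∑ x, pX x = 1 := by simpa only [hpX, Fintype.sum_prod_type] using hsum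
  have sW : ∑ w, pW w = 1 := by
    rw [← hsum]
    simp only [hpW, Fintype.sum_prod_type]
    rw [Finset.sum_comm]
    exact Finset.sum_congr rfl fun x _ => Finset.sum_comm
  have hpX_eq : ∀ x, pX x = ∑ y, pXY (x, y) := fun x => by
    simp only [hpX, hindep, ← Finset.mul_sum, sW, mul_one]
  have sXY : ∑ z, pXY z = 1 := by
    rw [Fintype.sum_prod_type, ← sX]
    simp only [hpX_eq]
  have hXW : ∀ x w, ∑ u, pXWU (x, w, u) = pX x * pW w := fun x w => by
    simp only [hpXWU]
    rw [Finset.sum_comm]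
    simp only [hindep, ← Finset.sum_mul, ← hpX_eq]
  have hU : ∀ u, ∑ x, ∑ w, pXWU (x, w, u) = pU u := fun u => by
    simp only [hpXWU, hpU]
    exact Finset.sum_congr rfl fun x _ => Finset.sum_comm
  have hXYW : ent pXY + ent pW ≤ ent p := by
    let e : ((X × Y) × W) × U ≃ X × Y × W × U :=
      (Equiv.prodAssoc _ _ _).trans (Equiv.prodAssoc _ _ _)
    rw [← ent_comp_equiv e p]
    exact ent_add_ent_le_of_marginal_eq_mul _ (fun z => hpos _) pXY pW sXY sW
      fun xy w => hindep xy.1 xy.2 w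
  have hXWU : ent pXWU ≤ ent pX + ent pW + ent pU := by
    refine ent_le_ent_add_ent_add_ent_of_marginal_eq_mul pXWU (fun ⟨x, w, u⟩ => ?_)
      pX pW pU sX sW hXW hU
    rw [hpXWU]
    exact Finset.sum_nonneg fun y _ => hpos _
  linarith

/-- If `W ⊥ (X,Y)`, `I(U;X) = ε` and `H(Y|U,X,W) = 0`, then `H(U) ≥ H(Y|X)`. -/
theorem stmt3 {X Y W U : Type*} [Fintype X] [Fintype Y] [Fintype W] [Fintype U]
    (p : X × Y × W × U → ℝ) (hpos : ∀ z, 0 ≤ p z) (hsum : ∑ z, p z = 1)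
    (pX : X → ℝ) (hpX : ∀ x, pX x = ∑ y, ∑ w, ∑ u, p (x, y, w, u))
    (pW : W → ℝ) (hpW : ∀ w, pW w = ∑ x, ∑ y, ∑ u, p (x, y, w, u))
    (pU : U → ℝ) (hpU : ∀ u, pU u = ∑ x, ∑ y, ∑ w, p (x, y, w, u))
    (pXY : X × Y → ℝ) (hpXY : ∀ x y, pXY (x, y) = ∑ w, ∑ u, p (x, y, w, u))
    (pXU : X × U → ℝ) (hpXU : ∀ x u, pXU (x, u) = ∑ y, ∑ w, p (x, y, w, u))
    (pXWU : X × W × U → ℝ) (hpXWU : ∀ x w u, pXWU (x, w, u) = ∑ y, p (x, y, w, u))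
    -- W is independent of (X,Y)
    (hindep : ∀ x y w, (∑ u, p (x, y, w, u)) = pXY (x, y) * pW w)
    (ε : ℝ) (hε : 0 ≤ ε)
    -- I(U;X) = ε
    (hI : ent pU + ent pX - ent pXU = ε)
    -- H(Y|U,X,W) = 0
    (hH : ent p - ent pXWU = 0) :
    -- H(U) ≥ H(Y|X)
    ent pU ≥ ent pXY - ent pX :=
  stmt3_general p hpos hsum pX hpX pW hpW pU hpU pXY pXWU hpXWU hindep hH
end

section
/- Let U satisfy I(X;U|Y,W) ≤ log(I(X;Y)+1)+4 with (X,W) independent of U, and define Z = X with probability α and Z = c (a fresh constant symbol) with probability 1−α, independently of everything else via the randomization, where α = ε/H(X). Then Ũ = (U,Z) satisfies I(Ũ;X) = ε and I(X;Ũ|Y,W) = (1−α) I(X;U|Y,W) + α H(X|Y) ≤ α H(X|Y) + (1−α)(log(I(X;Y)+1)+4). -/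
/-!
Write `h(α)` for the binary entropy in bits. Appending the randomized response `Z` of `X` to a
tuple of variables that contains `X` adds exactly `h(α)` to its entropy, since `Z` is then a
function of `X` and an independent `Bernoulli(α)` switch. Appending it to a tuple `V` that does not
contain `X` splits the entropy along the switch: `H(V, Z) = α H(V, X) + (1 - α) H(V) + h(α)`.
Hence `H(Ũ) = H(U) + α H(X) + h(α)` and, as `X ⫫ U`, `H(X, Ũ) = H(X) + H(U) + h(α)`, so
`I(Ũ; X) = α H(X) = ε`. Likewise `H(X,Y,W,Ũ) = H(X,Y,W,U) + h(α)` and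
`H(Y,W,Ũ) = α H(X,Y,W,U) + (1 - α) H(Y,W,U) + h(α)`, so that
`I(X; Ũ | Y,W) = (1 - α) I(X; U | Y,W) + α (H(X,Y,W) - H(Y,W))`, and `W ⫫ (X,Y)` turns the
last bracket into `H(X | Y)`. The bound follows from the hypothesis on `I(X; U | Y,W)`
since `α ≤ 1`.
-/

open Real

section Entropy

variable {A B : Type*} [Fintype A] [Fintype B]

lemma ent_eq_sum_negMulLog (p : A → ℝ) : ent p = (∑ a, negMulLog (p a)) / log 2 := by
  simp only [ent, negMulLog, logb, Finset.sum_div, ← Finset.sum_neg_distrib]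
  congr 1; funext a; ring

lemma ent_comp_equiv_s12 (e : A ≃ B) (p : B → ℝ) : ent (fun a => p (e a)) = ent p := by
  simp only [ent_eq_sum_negMulLog, e.sum_comp fun b => negMulLog (p b)]

lemma ent_const_mul (c : ℝ) {p : A → ℝ} (hp : ∑ a, p a = 1) :
    ent (fun a => c * p a) = c * ent p + negMulLog c / log 2 := by
  simp only [ent_eq_sum_negMulLog, negMulLog_mul, Finset.sum_add_distrib, ← Finset.sum_mul,
    ← Finset.mul_sum, hp]
  ring

lemma ent_eq_add_of_eq_mul {p : A × B → ℝ} {f : A → ℝ} {g : B → ℝ}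
    (hp : ∀ a b, p (a, b) = f a * g b) (hf : ∑ a, f a = 1) (hg : ∑ b, g b = 1) :
    ent p = ent f + ent g := by
  simp only [ent_eq_sum_negMulLog, Fintype.sum_prod_type, hp, negMulLog_mul,
    Finset.sum_add_distrib, ← Finset.sum_mul, ← Finset.mul_sum, hf, hg]
  ring

lemma sum_mul_eq_one {f : A → ℝ} {g : B → ℝ} (hf : ∑ a, f a = 1) (hg : ∑ b, g b = 1) :
    ∑ t : A × B, f t.1 * g t.2 = 1 := by
  simp only [Fintype.sum_prod_type, ← Finset.mul_sum, hf, hg, mul_one]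

lemma ent_prod_option (s : A × Option B → ℝ) :
    ent s = ent (fun a => s (a, none)) + ent (fun ab : A × B => s (ab.1, some ab.2)) := by
  simp only [ent_eq_sum_negMulLog, Fintype.sum_prod_type, Fintype.sum_option,
    Finset.sum_add_distrib, add_div]

lemma ent_ite_eq [DecidableEq B] (f : A → ℝ) (key : A → B) :
    ent (fun ab : A × B => if ab.2 = key ab.1 then f ab.1 else 0) = ent f := by
  simp [ent_eq_sum_negMulLog, Fintype.sum_prod_type, apply_ite negMulLog]

end Entropy

section Erasure

variable {A B : Type*} [Fintype A] [Fintype B] [DecidableEq B]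

def erasureKernel (α : ℝ) (b : B) (z : Option B) : ℝ :=
  if z = some b then α else if z = none then 1 - α else 0

lemma ent_mul_erasureKernel {p : A → ℝ} (hp : ∑ a, p a = 1) (key : A → B) (α : ℝ) :
    ent (fun az : A × Option B => p az.1 * erasureKernel α (key az.1) az.2)
      = ent p + binEntropy α / log 2 := by
  have hnone : (fun a => p a * erasureKernel α (key a) none) = fun a => (1 - α) * p a := by
    funext a; simp [erasureKernel, mul_comm]
  have hsome : (fun ab : A × B => p ab.1 * erasureKernel α (key ab.1) (some ab.2))
      = fun ab => if ab.2 = key ab.1 then α * p ab.1 else 0 := by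
    funext ab; simp [erasureKernel, mul_comm]
  rw [ent_prod_option, hnone, hsome, ent_ite_eq (fun a => α * p a), ent_const_mul _ hp,
    ent_const_mul _ hp, binEntropy_eq_negMulLog_add_negMulLog_one_sub]
  ring

lemma ent_sum_mul_erasureKernel {p : B × A → ℝ} (hp : ∑ ba, p ba = 1) (α : ℝ) :
    ent (fun az : A × Option B => ∑ b, p (b, az.1) * erasureKernel α b az.2)
      = α * ent p + (1 - α) * ent (fun a => ∑ b, p (b, a)) + binEntropy α / log 2 := by
  have hnone : (fun a => ∑ b, p (b, a) * erasureKernel α b none)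
      = fun a => (1 - α) * ∑ b, p (b, a) := by
    funext a; simp [erasureKernel, Finset.mul_sum, mul_comm]
  have hsome : (fun ab : A × B => ∑ b, p (b, ab.1) * erasureKernel α b (some ab.2))
      = fun ab => α * p (Equiv.prodComm A B ab) := by
    funext ab; simp [erasureKernel, mul_comm, Prod.swap]
  have hmarg : ∑ a, ∑ b, p (b, a) = 1 := by
    rw [Finset.sum_comm, ← hp, Fintype.sum_prod_type]
  rw [ent_prod_option, hnone, hsome, ent_const_mul _ hmarg,
    ent_const_mul _ (by rwa [Equiv.sum_comp]), ent_comp_equiv_s12,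
    binEntropy_eq_negMulLog_add_negMulLog_one_sub]
  ring

end Erasure

section Augment

variable {X Y W U : Type*} [Fintype Y] [Fintype W] [DecidableEq X]

def augmentedLaw (q : X × Y × W × U → ℝ) (α : ℝ) :
    X × Y × W × (U × Option X) → ℝ :=
  fun t => q (t.1, t.2.1, t.2.2.1, t.2.2.2.1) * erasureKernel α t.1 t.2.2.2.2

variable {q : X × Y × W × U → ℝ} (α : ℝ) {pX : X → ℝ} {pU : U → ℝ}

lemma sum_sum_augmentedLaw_of_eq_mul (hXU : ∀ x u, ∑ y, ∑ w, q (x, y, w, u) = pX x * pU u)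
    (x : X) (u : U) (z : Option X) :
    ∑ y, ∑ w, augmentedLaw q α (x, y, w, (u, z)) = pX x * pU u * erasureKernel α x z := by
  simp only [augmentedLaw, ← Finset.sum_mul, hXU]

variable [Fintype X] [Fintype U]

lemma ent_augmentedLaw (hq : ∑ t, q t = 1) :
    ent (augmentedLaw q α) = ent q + binEntropy α / log 2 := by
  let e : (X × Y × W × U) × Option X ≃ X × Y × W × (U × Option X) :=
    { toFun := fun ⟨(x, y, w, u), z⟩ => (x, y, w, (u, z))
      invFun := fun ⟨x, y, w, u, z⟩ => ((x, y, w, u), z)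
      left_inv := fun _ => rfl
      right_inv := fun _ => rfl }
  rw [← ent_comp_equiv_s12 e, ← ent_mul_erasureKernel hq Prod.fst α]
  rfl

lemma ent_augmentedLaw_marginal_YWU (hq : ∑ t, q t = 1) :
    ent (fun t : Y × W × (U × Option X) => ∑ x, augmentedLaw q α (x, t.1, t.2.1, t.2.2))
      = α * ent q + (1 - α) * ent (fun ywu => ∑ x, q (x, ywu)) + binEntropy α / log 2 := by
  let e : (Y × W × U) × Option X ≃ Y × W × (U × Option X) :=
    { toFun := fun ⟨(y, w, u), z⟩ => (y, w, (u, z))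
      invFun := fun ⟨y, w, u, z⟩ => ((y, w, u), z)
      left_inv := fun _ => rfl
      right_inv := fun _ => rfl }
  rw [← ent_comp_equiv_s12 e, ← ent_sum_mul_erasureKernel hq α]
  rfl

lemma ent_augmentedLaw_marginal_XU (hX : ∑ x, pX x = 1) (hU : ∑ u, pU u = 1)
    (hXU : ∀ x u, ∑ y, ∑ w, q (x, y, w, u) = pX x * pU u) :
    ent (fun t : X × (U × Option X) => ∑ y, ∑ w, augmentedLaw q α (t.1, y, w, t.2))
      = ent pX + ent pU + binEntropy α / log 2 := by
  rw [← ent_comp_equiv_s12 (Equiv.prodAssoc X U (Option X)),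
    ← ent_eq_add_of_eq_mul (p := fun t : X × U => pX t.1 * pU t.2) (fun _ _ => rfl) hX hU,
    ← ent_mul_erasureKernel (sum_mul_eq_one hX hU) Prod.fst α]
  congr 1
  funext ⟨⟨x, u⟩, z⟩
  exact sum_sum_augmentedLaw_of_eq_mul α hXU x u z

lemma ent_augmentedLaw_marginal_U (hX : ∑ x, pX x = 1) (hU : ∑ u, pU u = 1)
    (hXU : ∀ x u, ∑ y, ∑ w, q (x, y, w, u) = pX x * pU u) :
    ent (fun t : U × Option X => ∑ x, ∑ y, ∑ w, augmentedLaw q α (x, y, w, t))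
      = ent pU + α * ent pX + binEntropy α / log 2 := by
  have hmarg : (fun u => ∑ x, pX x * pU u) = pU := by
    funext u; rw [← Finset.sum_mul, hX, one_mul]
  have hprod := ent_eq_add_of_eq_mul (p := fun t : X × U => pX t.1 * pU t.2) (fun _ _ => rfl) hX hU
  have h := ent_sum_mul_erasureKernel (sum_mul_eq_one hX hU) α
  rw [hmarg, hprod] at h
  calc _ = _ := congrArg ent <| funext fun t =>
          Finset.sum_congr rfl fun x _ => sum_sum_augmentedLaw_of_eq_mul α hXU x t.1 t.2
    _ = _ := h
    _ = _ := by ring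

end Augment

section Independence

variable {X Y W U : Type*} {q : X × Y × W × U → ℝ}

lemma sum_sum_eq_mul_of_indep [Fintype Y] [Fintype W] [Fintype U] {pX : X → ℝ} {pU : U → ℝ}
    {pXW : X × W → ℝ} {pXWU : X × W × U → ℝ}
    (hpX : ∀ x, pX x = ∑ y, ∑ w, ∑ u, q (x, y, w, u))
    (hpXW : ∀ x w, pXW (x, w) = ∑ y, ∑ u, q (x, y, w, u))
    (hpXWU : ∀ x w u, pXWU (x, w, u) = ∑ y, q (x, y, w, u))
    (hindep : ∀ x w u, pXWU (x, w, u) = pXW (x, w) * pU u) (x : X) (u : U) :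
    ∑ y, ∑ w, q (x, y, w, u) = pX x * pU u :=
  calc ∑ y, ∑ w, q (x, y, w, u) = ∑ w, pXWU (x, w, u) := by
        rw [Finset.sum_comm]; simp only [hpXWU]
    _ = ∑ w, pXW (x, w) * pU u := by simp only [hindep]
    _ = pX x * pU u := by rw [← Finset.sum_mul, hpX, Finset.sum_comm]; simp only [hpXW]

lemma marginal_eq_mul_of_indep [Fintype X] [Fintype W] [Fintype U] {pY : Y → ℝ} {pW : W → ℝ}
    {pXY : X × Y → ℝ} {pYW : Y × W → ℝ} {pXYW : X × Y × W → ℝ}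
    (hpY : ∀ y, pY y = ∑ x, ∑ w, ∑ u, q (x, y, w, u))
    (hpXY : ∀ x y, pXY (x, y) = ∑ w, ∑ u, q (x, y, w, u))
    (hpYW : ∀ y w, pYW (y, w) = ∑ x, ∑ u, q (x, y, w, u))
    (hpXYW : ∀ x y w, pXYW (x, y, w) = ∑ u, q (x, y, w, u))
    (hindep : ∀ x y w, pXYW (x, y, w) = pXY (x, y) * pW w) (y : Y) (w : W) :
    pYW (y, w) = pY y * pW w :=
  calc pYW (y, w) = ∑ x, pXYW (x, y, w) := by simp only [hpYW, hpXYW]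
    _ = ∑ x, pXY (x, y) * pW w := by simp only [hindep]
    _ = pY y * pW w := by rw [← Finset.sum_mul, hpY]; simp only [hpXY]

end Independence

theorem stmt12_general {X Y W U : Type*} [Fintype X] [Fintype Y] [Fintype W] [Fintype U]
    [DecidableEq X]
    (q : X × Y × W × U → ℝ) (hsum : ∑ z, q z = 1)
    (pX : X → ℝ) (hpX : ∀ x, pX x = ∑ y, ∑ w, ∑ u, q (x, y, w, u))
    (pY : Y → ℝ) (hpY : ∀ y, pY y = ∑ x, ∑ w, ∑ u, q (x, y, w, u))
    (pW : W → ℝ) (hpW : ∀ w, pW w = ∑ x, ∑ y, ∑ u, q (x, y, w, u))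
    (pU : U → ℝ) (hpU : ∀ u, pU u = ∑ x, ∑ y, ∑ w, q (x, y, w, u))
    (pXY : X × Y → ℝ) (hpXY : ∀ x y, pXY (x, y) = ∑ w, ∑ u, q (x, y, w, u))
    (pXW : X × W → ℝ) (hpXW : ∀ x w, pXW (x, w) = ∑ y, ∑ u, q (x, y, w, u))
    (pYW : Y × W → ℝ) (hpYW : ∀ y w, pYW (y, w) = ∑ x, ∑ u, q (x, y, w, u))
    (pXYW : X × Y × W → ℝ) (hpXYW : ∀ x y w, pXYW (x, y, w) = ∑ u, q (x, y, w, u))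
    (pYWU : Y × W × U → ℝ) (hpYWU : ∀ y w u, pYWU (y, w, u) = ∑ x, q (x, y, w, u))
    (pXWU : X × W × U → ℝ) (hpXWU : ∀ x w u, pXWU (x, w, u) = ∑ y, q (x, y, w, u))
    -- W independent of (X,Y)
    (hindepW : ∀ x y w, pXYW (x, y, w) = pXY (x, y) * pW w)
    -- (X,W) independent of U
    (hindepU : ∀ x w u, pXWU (x, w, u) = pXW (x, w) * pU u)
    -- I(X;U|Y,W) ≤ log(I(X;Y)+1)+4
    (hCMI : ent pXYW + ent pYWU - ent pYW - ent q
        ≤ Real.logb 2 ((ent pX + ent pY - ent pXY) + 1) + 4)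
    (ε α : ℝ) (hεH : ε ≤ ent pX) (hHX : 0 < ent pX)
    (hα : α = ε / ent pX)
    -- r is the joint law of (X,Y,W,Ũ) with Ũ = (U,Z), Z = X w.p. α and none w.p. 1−α
    (r : X × Y × W × (U × Option X) → ℝ)
    (hr : ∀ x y w u z, r (x, y, w, (u, z))
        = q (x, y, w, u) * (if z = some x then α else if z = none then 1 - α else 0)) :
    -- I(Ũ;X) = ε
    (ent (fun t : U × Option X => ∑ x, ∑ y, ∑ w, r (x, y, w, t))
      + ent pX
      - ent (fun xt : X × (U × Option X) => ∑ y, ∑ w, r (xt.1, y, w, xt.2)) = ε) ∧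
    -- I(X;Ũ|Y,W) = (1−α) I(X;U|Y,W) + α H(X|Y)
    (ent pXYW
      + ent (fun ywt : Y × W × (U × Option X) => ∑ x, r (x, ywt.1, ywt.2.1, ywt.2.2))
      - ent pYW - ent r
      = (1 - α) * (ent pXYW + ent pYWU - ent pYW - ent q)
        + α * (ent pXY - ent pY)) ∧
    -- I(X;Ũ|Y,W) ≤ α H(X|Y) + (1−α)(log(I(X;Y)+1)+4)
    (ent pXYW
      + ent (fun ywt : Y × W × (U × Option X) => ∑ x, r (x, ywt.1, ywt.2.1, ywt.2.2))
      - ent pYW - ent r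
      ≤ α * (ent pXY - ent pY)
        + (1 - α) * (Real.logb 2 ((ent pX + ent pY - ent pXY) + 1) + 4)) := by
  have hα1 : 0 ≤ 1 - α := by rw [hα, sub_nonneg, div_le_one hHX]; exact hεH
  have hαH : α * ent pX = ε := by rw [hα, div_mul_cancel₀ _ hHX.ne']
  obtain rfl : r = augmentedLaw q α := funext fun ⟨x, y, w, u, z⟩ => hr x y w u z
  have hX : ∑ x, pX x = 1 := by simp only [hpX, ← hsum, Fintype.sum_prod_type]
  have hY : ∑ y, pY y = 1 := by
    simp only [hpY, ← hsum, Fintype.sum_prod_type, Finset.sum_comm (γ := Y)]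
  have hW : ∑ w, pW w = 1 := by
    simp only [hpW, ← hsum, Fintype.sum_prod_type, Finset.sum_comm (γ := W)]
  have hU : ∑ u, pU u = 1 := by
    simp only [hpU, ← hsum, Fintype.sum_prod_type, Finset.sum_comm (γ := U)]
  have hXY : ∑ t, pXY t = 1 := by simp only [hpXY, ← hsum, Fintype.sum_prod_type]
  have hXU := sum_sum_eq_mul_of_indep hpX hpXW hpXWU hindepU
  have eXYW : ent pXYW = ent pXY + ent pW := by
    rw [← ent_comp_equiv_s12 (Equiv.prodAssoc X Y W)]
    exact ent_eq_add_of_eq_mul (fun _ _ => hindepW _ _ _) hXY hW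
  have eYW : ent pYW = ent pY + ent pW :=
    ent_eq_add_of_eq_mul (marginal_eq_mul_of_indep hpY hpXY hpYW hpXYW hindepW) hY hW
  have eYWU : ent pYWU = ent (fun ywu => ∑ x, q (x, ywu)) :=
    congrArg ent (funext fun _ => hpYWU _ _ _)
  have hcond : ent pXYW
      + ent (fun t : Y × W × (U × Option X) => ∑ x, augmentedLaw q α (x, t.1, t.2.1, t.2.2))
      - ent pYW - ent (augmentedLaw q α)
      = (1 - α) * (ent pXYW + ent pYWU - ent pYW - ent q) + α * (ent pXY - ent pY) := by
    rw [ent_augmentedLaw_marginal_YWU α hsum, ent_augmentedLaw α hsum, eXYW, eYW, eYWU]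
    ring
  refine ⟨?_, hcond, ?_⟩
  · rw [ent_augmentedLaw_marginal_U α hX hU hXU, ent_augmentedLaw_marginal_XU α hX hU hXU]
    linarith
  · rw [hcond]
    nlinarith [mul_le_mul_of_nonneg_left hCMI hα1]

/-- Randomized-response augmentation step of the ESFRL proof: if `W ⊥ (X,Y)`, `U ⊥ (X,W)`,
`H(Y|U,X,W) = 0` and `I(X;U|Y,W) ≤ log(I(X;Y)+1)+4`, and `Z = X` w.p. `α = ε/H(X)` and a fresh
symbol `c` (here `none`) w.p. `1−α` (switch independent of everything), then `Ũ = (U,Z)` satisfies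
`I(Ũ;X) = ε` and `I(X;Ũ|Y,W) = (1−α) I(X;U|Y,W) + α H(X|Y) ≤ α H(X|Y) + (1−α)(log(I(X;Y)+1)+4)`. -/
theorem stmt12 {X Y W U : Type*} [Fintype X] [Fintype Y] [Fintype W] [Fintype U]
    [DecidableEq X]
    (q : X × Y × W × U → ℝ) (hpos : ∀ z, 0 ≤ q z) (hsum : ∑ z, q z = 1)
    (pX : X → ℝ) (hpX : ∀ x, pX x = ∑ y, ∑ w, ∑ u, q (x, y, w, u))
    (pY : Y → ℝ) (hpY : ∀ y, pY y = ∑ x, ∑ w, ∑ u, q (x, y, w, u))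
    (pW : W → ℝ) (hpW : ∀ w, pW w = ∑ x, ∑ y, ∑ u, q (x, y, w, u))
    (pU : U → ℝ) (hpU : ∀ u, pU u = ∑ x, ∑ y, ∑ w, q (x, y, w, u))
    (pXY : X × Y → ℝ) (hpXY : ∀ x y, pXY (x, y) = ∑ w, ∑ u, q (x, y, w, u))
    (pXW : X × W → ℝ) (hpXW : ∀ x w, pXW (x, w) = ∑ y, ∑ u, q (x, y, w, u))
    (pYW : Y × W → ℝ) (hpYW : ∀ y w, pYW (y, w) = ∑ x, ∑ u, q (x, y, w, u))
    (pXYW : X × Y × W → ℝ) (hpXYW : ∀ x y w, pXYW (x, y, w) = ∑ u, q (x, y, w, u))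
    (pYWU : Y × W × U → ℝ) (hpYWU : ∀ y w u, pYWU (y, w, u) = ∑ x, q (x, y, w, u))
    (pXWU : X × W × U → ℝ) (hpXWU : ∀ x w u, pXWU (x, w, u) = ∑ y, q (x, y, w, u))
    -- W independent of (X,Y)
    (hindepW : ∀ x y w, pXYW (x, y, w) = pXY (x, y) * pW w)
    -- (X,W) independent of U
    (hindepU : ∀ x w u, pXWU (x, w, u) = pXW (x, w) * pU u)
    -- H(Y|U,X,W) = 0
    (hH : ent q - ent pXWU = 0)
    -- I(X;U|Y,W) ≤ log(I(X;Y)+1)+4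
    (hCMI : ent pXYW + ent pYWU - ent pYW - ent q
        ≤ Real.logb 2 ((ent pX + ent pY - ent pXY) + 1) + 4)
    (ε α : ℝ) (hε0 : 0 ≤ ε) (hεH : ε ≤ ent pX) (hHX : 0 < ent pX)
    (hα : α = ε / ent pX)
    -- r is the joint law of (X,Y,W,Ũ) with Ũ = (U,Z), Z = X w.p. α and none w.p. 1−α
    (r : X × Y × W × (U × Option X) → ℝ)
    (hr : ∀ x y w u z, r (x, y, w, (u, z))
        = q (x, y, w, u) * (if z = some x then α else if z = none then 1 - α else 0)) :
    -- I(Ũ;X) = ε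
    (ent (fun t : U × Option X => ∑ x, ∑ y, ∑ w, r (x, y, w, t))
      + ent pX
      - ent (fun xt : X × (U × Option X) => ∑ y, ∑ w, r (xt.1, y, w, xt.2)) = ε) ∧
    -- I(X;Ũ|Y,W) = (1−α) I(X;U|Y,W) + α H(X|Y)
    (ent pXYW
      + ent (fun ywt : Y × W × (U × Option X) => ∑ x, r (x, ywt.1, ywt.2.1, ywt.2.2))
      - ent pYW - ent r
      = (1 - α) * (ent pXYW + ent pYWU - ent pYW - ent q)
        + α * (ent pXY - ent pY)) ∧
    -- I(X;Ũ|Y,W) ≤ α H(X|Y) + (1−α)(log(I(X;Y)+1)+4)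
    (ent pXYW
      + ent (fun ywt : Y × W × (U × Option X) => ∑ x, r (x, ywt.1, ywt.2.1, ywt.2.2))
      - ent pYW - ent r
      ≤ α * (ent pXY - ent pY)
        + (1 - α) * (Real.logb 2 ((ent pX + ent pY - ent pXY) + 1) + 4)) :=
  stmt12_general q hsum pX hpX pY hpY pW hpW pU hpU pXY hpXY pXW hpXW pYW hpYW pXYW hpXYW pYWU hpYWU
    pXWU hpXWU hindepW hindepU hCMI ε α hεH hHX hα r hr
end
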